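/- Let f : ℕ → ℕ be an arbitrary non-decreasing function and let d be a positive integer. Then there exist integers k₀ and n₀ such that if T is a rooted tree of depth at most d with at least n₀ leaves, then for some k ≤ k₀ there exists a vertex v of T that has at least f(k) children and such that the subtree of T rooted at each child of v has at most k leaves. -/

import Mathlib

/-- A finite rooted tree: each vertex is given by the list of subtrees rooted at its
children (a vertex with no children is a leaf). -/
inductive RTree : Type
  | node (ts : List RTree) : RTree

namespace RTree

/-- The children (subtrees) of the root. -/
def children : RTree → List RTree
  | node ts => ts

mutual
  /-- The number of leaves of a rooted tree. -/
  def numLeaves : RTree → ℕ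
    | node [] => 1
    | node (t :: ts) => numLeavesList (t :: ts)
  /-- Total number of leaves of a list of trees. -/
  def numLeavesList : List RTree → ℕ
    | [] => 0
    | t :: ts => numLeaves t + numLeavesList ts
end

mutual
  /-- The depth of a rooted tree: the maximum number of edges on a root-to-leaf path. -/
  def depth : RTree → ℕ
    | node [] => 0
    | node (t :: ts) => depthList (t :: ts) + 1
  /-- Maximum depth in a list of trees. -/
  def depthList : List RTree → ℕ
    | [] => 0
    | t :: ts => max (depth t) (depthList ts)
end

mutual
  /-- `Occurs v T`: `v` is a vertex of `T`, i.e. `v` is the subtree of `T` rooted at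
  some vertex of `T`. -/
  def Occurs : RTree → RTree → Prop
    | v, node ts => v = node ts ∨ OccursList v ts
  /-- `v` occurs in one of the trees of the list. -/
  def OccursList : RTree → List RTree → Prop
    | _, [] => False
    | v, t :: ts => Occurs v t ∨ OccursList v ts
end

end RTree


/-!
Induct on the depth with the explicit leaf bound `L = leafBound f`: `L 0 = 1` and
`L (d + 1) = max (L d) (f (L d) * L d)`. In a tree of depth at most `d + 1` with more than
`L (d + 1)` leaves, either some child subtree has more than `L d` leaves, and induction applies
to it, or every child subtree has at most `k = L d` leaves; then the root has at least
`f k` children, since otherwise the tree would have at most `f k * k` leaves.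
-/

namespace RTree

theorem numLeavesList_le_length_mul {k : ℕ} :
    ∀ {ts : List RTree}, (∀ t ∈ ts, t.numLeaves ≤ k) → numLeavesList ts ≤ ts.length * k
  | [], _ => by simp [numLeavesList]
  | t :: ts, h => by
    rw [List.forall_mem_cons] at h
    have := numLeavesList_le_length_mul h.2
    simp only [numLeavesList, List.length_cons, Nat.succ_mul]
    omega

theorem numLeaves_le_max_one_length_mul {k : ℕ} {T : RTree}
    (h : ∀ t ∈ T.children, t.numLeaves ≤ k) : T.numLeaves ≤ max 1 (T.children.length * k) := by
  obtain ⟨_ | ⟨t, ts⟩⟩ := T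
  · simp [numLeaves]
  · exact le_max_of_le_right (numLeavesList_le_length_mul h)

theorem depth_le_depthList_of_mem {t : RTree} :
    ∀ {ts : List RTree}, t ∈ ts → t.depth ≤ depthList ts
  | _ :: _, .head _ => le_max_left _ _
  | _ :: _, .tail _ ht => (depth_le_depthList_of_mem ht).trans (le_max_right _ _)

theorem depth_lt_of_mem_children {t T : RTree} (ht : t ∈ T.children) : t.depth < T.depth := by
  obtain ⟨_ | ⟨s, ts⟩⟩ := T
  · simp [children] at ht
  · exact Nat.lt_succ_of_le (depth_le_depthList_of_mem ht)

theorem occurs_self (T : RTree) : Occurs T T := by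
  obtain ⟨ts⟩ := T
  exact Or.inl rfl

theorem OccursList.of_mem {v t : RTree} (hv : Occurs v t) :
    ∀ {ts : List RTree}, t ∈ ts → OccursList v ts
  | _ :: _, .head _ => Or.inl hv
  | _ :: _, .tail _ ht => Or.inr (OccursList.of_mem hv ht)

theorem Occurs.of_mem_children {v t T : RTree} (ht : t ∈ T.children) (hv : Occurs v t) :
    Occurs v T := by
  obtain ⟨ts⟩ := T
  exact Or.inr (OccursList.of_mem hv ht)

end RTree

open RTree

def leafBound (f : ℕ → ℕ) : ℕ → ℕ
  | 0 => 1
  | d + 1 => max (leafBound f d) (f (leafBound f d) * leafBound f d)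

theorem leafBound_mono (f : ℕ → ℕ) : Monotone (leafBound f) :=
  monotone_nat_of_le_succ fun _ => le_max_left _ _

theorem one_le_leafBound (f : ℕ → ℕ) (d : ℕ) : 1 ≤ leafBound f d :=
  leafBound_mono f (Nat.zero_le d)

theorem exists_big_vertex_of_leafBound_lt (f : ℕ → ℕ) :
    ∀ (d : ℕ) (T : RTree), T.depth ≤ d → leafBound f d < T.numLeaves →
      ∃ k ≤ leafBound f d, ∃ v : RTree, Occurs v T ∧ f k ≤ v.children.length ∧
        ∀ t ∈ v.children, t.numLeaves ≤ k
  | 0, T, hT, hleaves => by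
    have hleaf : T.children = [] := List.eq_nil_iff_forall_not_mem.2 fun _ ht =>
      Nat.not_lt_zero _ ((depth_lt_of_mem_children ht).trans_le hT)
    have hone : T.numLeaves ≤ 1 := by
      simpa [hleaf] using numLeaves_le_max_one_length_mul (T := T) (k := 0) (by simp [hleaf])
    exact absurd hleaves (not_lt.2 hone)
  | d + 1, T, hT, hleaves => by
    set k := leafBound f d
    by_cases hbig : ∃ t ∈ T.children, k < t.numLeaves
    · obtain ⟨t, ht, hkt⟩ := hbig
      have htd : t.depth ≤ d := Nat.lt_succ_iff.1 ((depth_lt_of_mem_children ht).trans_le hT)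
      obtain ⟨k', hk', v, hv, hfv, hvc⟩ := exists_big_vertex_of_leafBound_lt f d t htd hkt
      exact ⟨k', hk'.trans (leafBound_mono f d.le_succ), v, hv.of_mem_children ht, hfv, hvc⟩
    · push Not at hbig
      refine ⟨k, leafBound_mono f d.le_succ, T, occurs_self T, ?_, hbig⟩
      by_contra! hfew
      have hcount : T.numLeaves ≤ max 1 (f k * k) :=
        (numLeaves_le_max_one_length_mul hbig).trans
          (max_le_max_left 1 (Nat.mul_le_mul_right k hfew.le))
      have hbound : max 1 (f k * k) ≤ leafBound f (d + 1) :=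
        max_le (one_le_leafBound f _) (le_max_right _ _)
      omega

/-- Let `f : ℕ → ℕ` be non-decreasing and `d` a positive integer.  There exist `k₀`
and `n₀` such that every rooted tree of depth at most `d` with at least `n₀` leaves
has, for some `k ≤ k₀`, a vertex with at least `f(k)` children such that the subtree
rooted at each child has at most `k` leaves. -/
theorem big_vertex_in_bounded_depth_tree (f : ℕ → ℕ) (hf : Monotone f)
    (d : ℕ) (hd : 0 < d) :
    ∃ k₀ n₀ : ℕ, ∀ T : RTree, T.depth ≤ d → n₀ ≤ T.numLeaves →
      ∃ k ≤ k₀, ∃ v : RTree, RTree.Occurs v T ∧ f k ≤ v.children.length ∧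
        ∀ t ∈ v.children, t.numLeaves ≤ k :=
  ⟨leafBound f d, leafBound f d + 1, fun T hT hleaves =>
    exists_big_vertex_of_leafBound_lt f d T hT hleaves⟩
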